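/- A polynomial P over 𝔽_2 of degree n with nonzero constant term is regular (i.e., k-regular for all 1 ≤ k ≤ ⌊n/2⌋) if and only if it is irreducible and primitive. -/

import Mathlib

open Polynomial

/-- `f` is `k`-regular over `K`: no product of `k` roots of `f` (with distinct
indices, counting multiplicity) in an algebraic closure of `K` equals `1`. -/
def kRegular (K : Type*) [Field K] (f : Polynomial K) (k : ℕ) : Prop :=
  ∀ s : Multiset (AlgebraicClosure K),
    s ≤ (f.map (algebraMap K (AlgebraicClosure K))).roots →
    Multiset.card s = k → s.prod ≠ 1

/-!
The roots of an irreducible `P` of degree `n` over `𝔽_q` form a single Frobenius orbit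
`x, x ^ q, …, x ^ q ^ (n - 1)`, so the products of `k` distinct roots are the powers
`x ^ ∑ i ∈ S, q ^ i` with `#S = k`, and such a product is `1` iff `orderOf x` divides the
exponent. For `q = 2`, if `e = orderOf x` is a proper divisor of `2 ^ n - 1`, the binary digits
of `e` and their complement in `{0, …, n - 1}` are two nonempty sets with digit sums `e` and
`2 ^ n - 1 - e`; both sums are divisible by `e` and one of the sets has at most `n / 2` elements.
If instead `e = 2 ^ n - 1`, no sum over a nonempty proper subset is divisible by `e`. Finally, a
reducible `P` has a factor of degree `d ≤ n / 2`, whose `d` roots multiply to its constant term,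
which is `1`.
-/

open Finset

section FrobeniusOrbit

variable {K L : Type*} [Field K] [Fintype K] [Field L] [Algebra K L] {f : K[X]} {x : L}

theorem aeval_pow_card_pow_eq_zero (hx : aeval x f = 0) (i : ℕ) :
    aeval (x ^ Fintype.card K ^ i) f = 0 := by
  have h := aeval_algHom_apply (FiniteField.frobeniusAlgHom K L ^ i) x f
  rwa [hx, map_zero, AlgHom.coe_pow, FiniteField.coe_frobeniusAlgHom, pow_iterate] at h

theorem Irreducible.pow_card_pow_eq_self_iff (hf : Irreducible f) (hx : aeval x f = 0) (d : ℕ) :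
    x ^ Fintype.card K ^ d = x ↔ f.natDegree ∣ d := by
  rw [hf.natDegree_dvd_iff_dvd_X_pow_card_pow_sub_X, ← hf.dvd_iff_aeval_eq_zero hx,
    Nat.card_eq_fintype_card]
  simp [sub_eq_zero]

theorem Irreducible.injOn_pow_card_pow (hf : Irreducible f) (hx : aeval x f = 0) :
    Set.InjOn (x ^ Fintype.card K ^ ·) (Set.Iio f.natDegree) := by
  intro i hi j hj hij
  wlog hlt : i < j generalizing i j
  · exact (not_lt.mp hlt).eq_or_lt.elim Eq.symm fun h => (this hj hi hij.symm h).symm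
  -- raising both sides to the power `q ^ (n - j)` turns `x ^ q ^ j` into `x ^ q ^ n = x`
  have hcycle : x ^ Fintype.card K ^ (i + (f.natDegree - j)) = x := by
    have hn := (hf.pow_card_pow_eq_self_iff hx f.natDegree).mpr dvd_rfl
    simp only at hij
    rw [pow_add, pow_mul, hij, ← pow_mul, ← pow_add, Nat.add_sub_cancel' (le_of_lt hj), hn]
  simp only [Set.mem_Iio] at hi hj
  have := Nat.le_of_dvd (by omega) ((hf.pow_card_pow_eq_self_iff hx _).mp hcycle)
  omega

theorem Irreducible.roots_map_eq (hf : Irreducible f) (hsplit : (f.map (algebraMap K L)).Splits)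
    (hx : aeval x f = 0) :
    (f.map (algebraMap K L)).roots =
      (Multiset.range f.natDegree).map (x ^ Fintype.card K ^ ·) := by
  have hnodup : ((Multiset.range f.natDegree).map (x ^ Fintype.card K ^ ·)).Nodup :=
    (Multiset.nodup_range _).map_on fun i hi j hj =>
      hf.injOn_pow_card_pow hx (by simpa using hi) (by simpa using hj)
  symm
  refine Multiset.eq_of_le_of_card_le ((Multiset.le_iff_subset hnodup).mpr fun y hy => ?_) ?_
  · obtain ⟨i, -, rfl⟩ := Multiset.mem_map.mp hy
    exact (mem_roots (map_ne_zero hf.ne_zero)).mpr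
      (by rw [IsRoot, eval_map_algebraMap, aeval_pow_card_pow_eq_zero hx])
  · rw [splits_iff_card_roots.mp hsplit, natDegree_map, Multiset.card_map, Multiset.card_range]

theorem Irreducible.orderOf_dvd_card_pow_natDegree_sub_one (hf : Irreducible f)
    (hx : aeval x f = 0) (hx0 : x ≠ 0) : orderOf x ∣ Fintype.card K ^ f.natDegree - 1 := by
  refine orderOf_dvd_of_pow_eq_one (mul_left_cancel₀ hx0 ?_)
  rw [mul_one, ← pow_succ', Nat.sub_add_cancel (Nat.one_le_pow _ _ Fintype.card_pos),
    (hf.pow_card_pow_eq_self_iff hx _).mpr dvd_rfl]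

end FrobeniusOrbit

section kRegular

variable {K : Type*} [Field K] {f : K[X]}

theorem not_kRegular_of_monic_dvd {u : K[X]} (hf : f ≠ 0) (hu : u.Monic) (hdvd : u ∣ f)
    (hcoeff : u.coeff 0 = (-1) ^ u.natDegree) : ¬ kRegular K f u.natDegree := by
  set σ := algebraMap K (AlgebraicClosure K)
  have hsplit : (u.map σ).Splits := IsAlgClosed.splits _
  have hprod := hsplit.coeff_zero_eq_prod_roots_of_monic (hu.map σ)
  rw [coeff_map, hcoeff, natDegree_map, map_pow, map_neg, map_one] at hprod
  refine fun hreg => hreg _ (roots.le_of_dvd (map_ne_zero hf) (map_dvd σ hdvd)) ?_ ?_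
  · rw [splits_iff_card_roots.mp hsplit, natDegree_map]
  · exact (mul_eq_left₀ (pow_ne_zero _ (neg_ne_zero.mpr one_ne_zero))).mp hprod.symm

theorem kRegular_iff_of_roots_eq_map {n : ℕ} {g : ℕ → AlgebraicClosure K}
    (hg : Set.InjOn g (Set.Iio n))
    (hroots : (f.map (algebraMap K (AlgebraicClosure K))).roots = (Multiset.range n).map g)
    (k : ℕ) : kRegular K f k ↔ ∀ S ⊆ range n, #S = k → ∏ i ∈ S, g i ≠ 1 := by
  classical
  rw [← coe_range] at hg
  refine ⟨fun hreg S hS hcard => hreg _ ?_ (by simpa using hcard), ?_⟩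
  · rw [hroots]
    exact Multiset.map_le_map (val_le_iff.mpr hS)
  · rintro h s hs rfl
    have hnodup : s.Nodup :=
      Multiset.nodup_of_le hs (hroots ▸ (Multiset.nodup_range n).map_on hg)
    have hsub : s.toFinset ⊆ (range n).image g := fun y hy => by
      simpa [hroots] using Multiset.mem_of_le hs (Multiset.mem_toFinset.mp hy)
    obtain ⟨S, hS, hSs⟩ := subset_image_iff.mp hsub
    have hs : s = S.val.map g := by
      rw [← image_val_of_injOn (hg.mono hS), hSs, Multiset.toFinset_val, hnodup.dedup]
    subst hs
    exact fun hprod => h S hS (by simp) (by rwa [prod_eq_multiset_prod])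

theorem Irreducible.kRegular_iff_not_orderOf_dvd [Fintype K] (hf : Irreducible f)
    {x : AlgebraicClosure K} (hx : aeval x f = 0) (k : ℕ) :
    kRegular K f k ↔
      ∀ S ⊆ range f.natDegree, #S = k → ¬ orderOf x ∣ ∑ i ∈ S, Fintype.card K ^ i := by
  rw [kRegular_iff_of_roots_eq_map (hf.injOn_pow_card_pow hx)
    (hf.roots_map_eq (IsAlgClosed.splits _) hx)]
  simp_rw [prod_pow_eq_pow_sum, orderOf_dvd_iff_pow_eq_one]

end kRegular

theorem sum_sdiff_range_two_pow {n : ℕ} {S : Finset ℕ} (hS : S ⊆ range n) :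
    ∑ i ∈ range n \ S, 2 ^ i = 2 ^ n - 1 - ∑ i ∈ S, 2 ^ i := by
  have h := sum_sdiff (f := (2 ^ ·)) hS
  rw [Nat.geomSum_eq le_rfl, Nat.div_one] at h
  omega

theorem sum_two_pow_lt_of_ssubset_range {n : ℕ} {S : Finset ℕ} (hS : S ⊂ range n) :
    ∑ i ∈ S, 2 ^ i < 2 ^ n - 1 := by
  have hsum := sum_sdiff_range_two_pow hS.subset
  have hpos : 0 < ∑ i ∈ range n \ S, 2 ^ i :=
    sum_pos (fun _ _ => by positivity) (sdiff_nonempty.mpr hS.not_subset)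
  omega

theorem exists_subset_range_dvd_sum_two_pow {n e : ℕ} (he : e ∣ 2 ^ n - 1)
    (hlt : e < 2 ^ n - 1) :
    ∃ S ⊆ range n, S.Nonempty ∧ #S ≤ n / 2 ∧ e ∣ ∑ i ∈ S, 2 ^ i := by
  set T := e.bitIndices.toFinset
  have hTe : ∑ i ∈ T, 2 ^ i = e := sum_toFinset_bitIndices_two_pow e
  have hT : T ⊆ range n := fun i hi => mem_range.mpr <|
    (Nat.pow_lt_pow_iff_right one_lt_two).mp <|
      (Nat.two_pow_le_of_mem_bitIndices (List.mem_toFinset.mp hi)).trans_lt (by omega)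
  have hTc := sum_sdiff_range_two_pow hT
  rw [hTe] at hTc
  have he0 : e ≠ 0 := by rintro rfl; rw [zero_dvd_iff] at he; omega
  have hcard : #(range n \ T) + #T = n := by rw [card_sdiff_add_card_eq_card hT, card_range]
  rcases le_or_gt #T (n / 2) with h | h
  · exact ⟨T, hT, nonempty_of_sum_ne_zero (hTe ▸ he0), h, hTe ▸ dvd_rfl⟩
  · refine ⟨range n \ T, sdiff_subset, nonempty_of_sum_ne_zero (f := (2 ^ ·)) (by omega),
      by omega, ?_⟩
    rw [hTc]
    exact Nat.dvd_sub he dvd_rfl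

theorem forall_not_dvd_sum_two_pow_iff {n e : ℕ} (hn : 0 < n) (he : e ∣ 2 ^ n - 1) :
    (∀ S ⊆ range n, S.Nonempty → #S ≤ n / 2 → ¬ e ∣ ∑ i ∈ S, 2 ^ i) ↔
      e = 2 ^ n - 1 := by
  have hpos : 0 < 2 ^ n - 1 := Nat.sub_pos_of_lt (Nat.one_lt_two_pow hn.ne')
  constructor
  · intro h
    by_contra hne
    obtain ⟨S, hS, hSne, hcard, hdvd⟩ :=
      exists_subset_range_dvd_sum_two_pow he ((Nat.le_of_dvd hpos he).lt_of_ne hne)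
    exact h S hS hSne hcard hdvd
  · rintro rfl S hS hSne hcard hdvd
    have hssub : S ⊂ range n := Finset.ssubset_iff_subset_ne.mpr
      ⟨hS, fun h => by rw [h, card_range] at hcard; omega⟩
    exact (Nat.le_of_dvd (sum_pos (fun _ _ => by positivity) hSne) hdvd).not_gt
      (sum_two_pow_lt_of_ssubset_range hssub)

theorem ZMod.eq_one_of_ne_zero_two : ∀ {a : ZMod 2}, a ≠ 0 → a = 1 := by decide

theorem irreducible_of_forall_kRegular {P : (ZMod 2)[X]} (hP : 0 < P.natDegree)
    (hc : P.coeff 0 ≠ 0)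
    (hreg : ∀ k, 1 ≤ k → k ≤ P.natDegree / 2 → kRegular (ZMod 2) P k) :
    Irreducible P := by
  have hP0 : P ≠ 0 := ne_zero_of_natDegree_gt hP
  have hmonic : P.Monic := ZMod.eq_one_of_ne_zero_two (leadingCoeff_ne_zero.mpr hP0)
  refine (hmonic.irreducible_iff_lt_natDegree_lt fun h => by simp [h] at hP).mpr ?_
  rintro u hu hdeg ⟨v, rfl⟩
  rw [mem_Ioc] at hdeg
  refine not_kRegular_of_monic_dvd hP0 hu (dvd_mul_right u v) ?_ (hreg _ hdeg.1 hdeg.2)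
  rw [mul_coeff_zero] at hc
  rw [CharTwo.neg_eq, one_pow]
  exact ZMod.eq_one_of_ne_zero_two (left_ne_zero_of_mul hc)

theorem Irreducible.forall_kRegular_iff_orderOf_eq {P : (ZMod 2)[X]} (hP : Irreducible P)
    (hc : P.coeff 0 ≠ 0) {x : AlgebraicClosure (ZMod 2)} (hx : aeval x P = 0) :
    (∀ k, 1 ≤ k → k ≤ P.natDegree / 2 → kRegular (ZMod 2) P k) ↔
      orderOf x = 2 ^ P.natDegree - 1 := by
  have hx0 : x ≠ 0 := by
    rintro rfl
    exact hc (by simpa [← coeff_zero_eq_aeval_zero'] using hx)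
  have hdvd := hP.orderOf_dvd_card_pow_natDegree_sub_one hx hx0
  rw [ZMod.card] at hdvd
  simp_rw [← forall_not_dvd_sum_two_pow_iff hP.natDegree_pos hdvd,
    hP.kRegular_iff_not_orderOf_dvd hx, ZMod.card]
  exact ⟨fun h S hS hne hcard => h _ hne.card_pos hcard S hS rfl,
    fun h k hk1 hk2 S hS hcard => h S hS (card_pos.mp (hcard ▸ hk1)) (hcard ▸ hk2)⟩

theorem regular_iff_irreducible_primitive_F2 (P : Polynomial (ZMod 2)) (n : ℕ)
    (hn : P.natDegree = n) (h0 : 0 < n) (hc : P.coeff 0 ≠ 0) :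
    (∀ k, 1 ≤ k → k ≤ n / 2 → kRegular (ZMod 2) P k) ↔
      (Irreducible P ∧ ∀ x : AlgebraicClosure (ZMod 2),
        (P.map (algebraMap (ZMod 2) (AlgebraicClosure (ZMod 2)))).IsRoot x →
        orderOf x = 2 ^ n - 1) := by
  subst hn
  simp_rw [IsRoot, eval_map_algebraMap]
  constructor
  · intro hreg
    have hirr := irreducible_of_forall_kRegular h0 hc hreg
    exact ⟨hirr, fun x hx => (hirr.forall_kRegular_iff_orderOf_eq hc hx).mp hreg⟩
  · rintro ⟨hirr, hprim⟩
    obtain ⟨x, hx⟩ := IsAlgClosed.exists_aeval_eq_zero (AlgebraicClosure (ZMod 2)) P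
      (degree_pos_of_irreducible hirr).ne'
    exact (hirr.forall_kRegular_iff_orderOf_eq hc hx).mpr (hprim x hx)
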